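/- The constructions between orthomodular lattices and orthomodular near semirings are mutually inverse. Precisely: (i) in any orthomodular lattice ⟨L, ∨, ∧, ', 0, 1⟩, with Sasaki multiplication x·y = (x ∨ y') ∧ y, the meet recovered De Morgan-wise from join equals the original meet, (x' ∨ y')' = x ∧ y; (ii) in any orthomodular near semiring ⟨R, +, ·, α, 0, 1⟩, the Sasaki multiplication of the induced orthomodular lattice recovers the original multiplication, i.e., α(α(x + α(y)) + α(y)) = x·y for all x, y ∈ R. -/

import Mathlib

/-- A near semiring: ⟨R, +, ·, 0, 1⟩ with ⟨R, +, 0⟩ a commutative monoid,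
⟨R, ·, 1⟩ a unital groupoid, right distributivity, and 0 annihilating. -/
structure NearSemiring (R : Type*) where
  add : R → R → R
  mul : R → R → R
  zero : R
  one : R
  add_assoc : ∀ x y z : R, add (add x y) z = add x (add y z)
  add_comm : ∀ x y : R, add x y = add y x
  add_zero : ∀ x : R, add x zero = x
  mul_one : ∀ x : R, mul x one = x
  one_mul : ∀ x : R, mul one x = x
  right_distrib : ∀ x y z : R, mul (add x y) z = add (mul x z) (mul y z)
  mul_zero : ∀ x : R, mul x zero = zero
  zero_mul : ∀ x : R, mul zero x = zero

/-- The induced relation: x ≤ y iff x + y = y. -/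
def NearSemiring.le {R : Type*} (S : NearSemiring R) (x y : R) : Prop :=
  S.add x y = y

/-- An involutive near semiring: an idempotent near semiring with an
antitone involution α (antitone w.r.t. the order x ≤ y iff x + y = y). -/
structure InvNearSemiring (R : Type*) extends NearSemiring R where
  add_idem : ∀ x : R, add x x = x
  alpha : R → R
  alpha_alpha : ∀ x : R, alpha (alpha x) = x
  alpha_antitone : ∀ x y : R, add x y = y → add (alpha y) (alpha x) = alpha x

/-- A Łukasiewicz near semiring: an involutive near semiring satisfying (Ł). -/
structure LukNearSemiring (R : Type*) extends InvNearSemiring R where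
  luk : ∀ x y : R,
    mul (alpha (mul x (alpha y))) (alpha y) = mul (alpha (mul y (alpha x))) (alpha x)

/-- An orthomodular near semiring: a Łukasiewicz near semiring with x = x·(x+y). -/
structure OMNearSemiring (R : Type*) extends LukNearSemiring R where
  om : ∀ x y : R, x = mul x (add x y)

/-!
An antitone involution turns joins into meets, which gives (i). For (ii), put `c = x + α y`.
Since `α y · y = 0`, right distributivity gives `x · y = c · y`. As `α y ≤ c`, both `α c ≤ y`
and `α y ≤ c` are absorbed by multiplication (`u ≤ v → u · v = u`, from `x = x · (x + y)`), and
the Łukasiewicz identity for `α c, α y` collapses to `c · y = y · c`. Hence `c · y` lies below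
both `c` and `y`, i.e. below their meet `α (α c + α y)`; conversely the meet `m` satisfies
`m = m · y ≤ c · y`.
-/

theorem Antitone.map_sup_of_involutive {L : Type*} [Lattice L] {f : L → L}
    (hinv : Function.Involutive f) (hf : Antitone f) (a b : L) :
    f (a ⊔ b) = f a ⊓ f b := by
  refine le_antisymm (le_inf (hf le_sup_left) (hf le_sup_right)) ?_
  have ha : a ≤ f (f a ⊓ f b) := by simpa only [hinv a] using hf (inf_le_left : f a ⊓ f b ≤ f a)
  have hb : b ≤ f (f a ⊓ f b) := by simpa only [hinv b] using hf (inf_le_right : f a ⊓ f b ≤ f b)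
  simpa only [hinv _] using hf (sup_le ha hb)

namespace NearSemiring

variable {R : Type*} (S : NearSemiring R)

theorem le_antisymm {u v : R} (huv : S.le u v) (hvu : S.le v u) : u = v := by
  unfold le at *
  rw [← hvu, S.add_comm, huv]

theorem mul_le_mul_right {u v : R} (h : S.le u v) (w : R) : S.le (S.mul u w) (S.mul v w) := by
  unfold le at *
  rw [← S.right_distrib, h]

end NearSemiring

namespace InvNearSemiring

variable {R : Type*} (S : InvNearSemiring R)

def meet (u v : R) : R :=
  S.alpha (S.add (S.alpha u) (S.alpha v))

theorem le_add_left (u v : R) : S.le u (S.add u v) := by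
  rw [NearSemiring.le, ← S.add_assoc, S.add_idem]

theorem le_add_right (u v : R) : S.le v (S.add u v) := by
  rw [S.add_comm]
  exact S.le_add_left v u

theorem add_le {u v w : R} (hu : S.le u w) (hv : S.le v w) : S.le (S.add u v) w := by
  unfold NearSemiring.le at *
  rw [S.add_assoc, hv, hu]

theorem alpha_le_alpha {u v : R} (h : S.le u v) : S.le (S.alpha v) (S.alpha u) :=
  S.alpha_antitone u v h

theorem alpha_le_iff_alpha_le {u v : R} : S.le (S.alpha u) v ↔ S.le (S.alpha v) u := by
  constructor <;> intro h <;> simpa only [S.alpha_alpha] using S.alpha_le_alpha h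

theorem meet_le_left (u v : R) : S.le (S.meet u v) u := by
  simpa only [meet, S.alpha_alpha] using S.alpha_le_alpha (S.le_add_left (S.alpha u) (S.alpha v))

theorem meet_le_right (u v : R) : S.le (S.meet u v) v := by
  simpa only [meet, S.alpha_alpha] using S.alpha_le_alpha (S.le_add_right (S.alpha u) (S.alpha v))

theorem le_meet {w u v : R} (hu : S.le w u) (hv : S.le w v) : S.le w (S.meet u v) := by
  simpa only [meet, S.alpha_alpha] using
    S.alpha_le_alpha (S.add_le (S.alpha_le_alpha hu) (S.alpha_le_alpha hv))

end InvNearSemiring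

namespace OMNearSemiring

variable {R : Type*} (S : OMNearSemiring R)

theorem mul_eq_of_le {u v : R} (h : S.le u v) : S.mul u v = u := by
  conv_rhs => rw [S.om u v, h]

theorem le_one (u : R) : S.le u S.one := by
  rw [NearSemiring.le, S.add_comm]
  exact (S.one_mul _).symm.trans (S.om S.one u).symm

theorem mul_le_right (u v : R) : S.le (S.mul u v) v := by
  simpa only [S.one_mul] using S.mul_le_mul_right (S.le_one u) v

theorem alpha_one : S.alpha S.one = S.zero := by
  have h := S.alpha_le_alpha (S.le_one (S.alpha S.zero))
  rw [S.alpha_alpha] at h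
  exact (S.add_zero _).symm.trans h

theorem mul_alpha_self (u : R) : S.mul u (S.alpha u) = S.zero := by
  simpa only [S.alpha_one, S.mul_zero, S.one_mul, S.alpha_alpha] using (S.luk u S.one).symm

theorem alpha_mul_self (u : R) : S.mul (S.alpha u) u = S.zero := by
  simpa only [S.alpha_alpha] using S.mul_alpha_self (S.alpha u)

theorem add_alpha_mul (x y : R) : S.mul (S.add x (S.alpha y)) y = S.mul x y := by
  rw [S.right_distrib, S.alpha_mul_self, S.add_zero]

theorem mul_comm_of_alpha_le {c y : R} (h : S.le (S.alpha y) c) : S.mul c y = S.mul y c := by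
  have hc : S.le (S.alpha c) y := S.alpha_le_iff_alpha_le.mp h
  simpa only [S.alpha_alpha, S.mul_eq_of_le hc, S.mul_eq_of_le h] using
    S.luk (S.alpha c) (S.alpha y)

theorem mul_eq_meet_of_alpha_le {c y : R} (h : S.le (S.alpha y) c) :
    S.mul c y = S.meet c y := by
  refine S.le_antisymm (S.le_meet ?_ (S.mul_le_right c y)) ?_
  · rw [S.mul_comm_of_alpha_le h]
    exact S.mul_le_right y c
  · have hm : S.mul (S.meet c y) y = S.meet c y := S.mul_eq_of_le (S.meet_le_right c y)
    simpa only [hm] using S.mul_le_mul_right (S.meet_le_left c y) y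

end OMNearSemiring

theorem orthomodularLattice_omNearSemiring_inverse_general {L R : Type*} [Lattice L]
    (compl : L → L)
    (compl_compl : ∀ x : L, compl (compl x) = x)
    (compl_antitone : ∀ x y : L, x ≤ y → compl y ≤ compl x)
    (S : OMNearSemiring R) :
    -- (i) in an orthomodular lattice, the De Morgan meet equals the meet
    (∀ x y : L, compl (compl x ⊔ compl y) = x ⊓ y) ∧
    -- (ii) in an orthomodular near semiring, the Sasaki multiplication of the
    -- induced orthomodular lattice recovers the original multiplication:
    -- α(α(x + α(y)) + α(y)) = x·y
    (∀ x y : R,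
      S.alpha (S.add (S.alpha (S.add x (S.alpha y))) (S.alpha y)) = S.mul x y) := by
  refine ⟨fun x y => ?_, fun x y => ?_⟩
  · rw [Antitone.map_sup_of_involutive compl_compl (fun a b h => compl_antitone a b h),
      compl_compl, compl_compl]
  · rw [← S.add_alpha_mul]
    exact (S.mul_eq_meet_of_alpha_le (S.le_add_right x (S.alpha y))).symm

/-- The constructions between orthomodular lattices and orthomodular near
semirings are mutually inverse. -/
theorem orthomodularLattice_omNearSemiring_inverse {L R : Type*} [Lattice L]
    [BoundedOrder L] (compl : L → L)
    (compl_compl : ∀ x : L, compl (compl x) = x)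
    (compl_antitone : ∀ x y : L, x ≤ y → compl y ≤ compl x)
    (inf_compl : ∀ x : L, x ⊓ compl x = ⊥)
    (sup_compl : ∀ x : L, x ⊔ compl x = ⊤)
    (orthomodular : ∀ x y : L, x ≤ y → y = x ⊔ (y ⊓ compl x))
    (S : OMNearSemiring R) :
    -- (i) in an orthomodular lattice, the De Morgan meet equals the meet
    (∀ x y : L, compl (compl x ⊔ compl y) = x ⊓ y) ∧
    -- (ii) in an orthomodular near semiring, the Sasaki multiplication of the
    -- induced orthomodular lattice recovers the original multiplication:
    -- α(α(x + α(y)) + α(y)) = x·y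
    (∀ x y : R,
      S.alpha (S.add (S.alpha (S.add x (S.alpha y))) (S.alpha y)) = S.mul x y) :=
  orthomodularLattice_omNearSemiring_inverse_general compl compl_compl compl_antitone S
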